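/- Two merge forests admit compatible presentations if and only if they have the same number of connected components (i.e., the same eventual cardinality |M(t)| for t large). -/

import Mathlib

open scoped ENNReal NNReal

/-- A persistent set: a functor `ℝ → Set`, with `ℝ` regarded as a poset category. -/
structure PersistentSet where
  obj : ℝ → Type
  map : ∀ {s t : ℝ}, s ≤ t → obj s → obj t
  map_id : ∀ (t : ℝ) (x : obj t), map (le_refl t) x = x
  map_comp : ∀ {s t u : ℝ} (h1 : s ≤ t) (h2 : t ≤ u) (x : obj s),
    map h2 (map h1 x) = map (le_trans h1 h2) x

/-- An `ε`-interleaving between persistent sets `M` and `N`. -/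
def Interleaved (M N : PersistentSet) (ε : ℝ) : Prop :=
  ∃ (hε : 0 ≤ ε) (φ : ∀ t, M.obj t → N.obj (t + ε)) (ψ : ∀ t, N.obj t → M.obj (t + ε)),
    (∀ (s t : ℝ) (h : s ≤ t) (x : M.obj s),
      φ t (M.map h x) = N.map (by linarith : s + ε ≤ t + ε) (φ s x)) ∧
    (∀ (s t : ℝ) (h : s ≤ t) (x : N.obj s),
      ψ t (N.map h x) = M.map (by linarith : s + ε ≤ t + ε) (ψ s x)) ∧
    (∀ (s : ℝ) (x : M.obj s), ψ (s + ε) (φ s x) = M.map (by linarith : s ≤ s + ε + ε) x) ∧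
    (∀ (s : ℝ) (x : N.obj s), φ (s + ε) (ψ s x) = N.map (by linarith : s ≤ s + ε + ε) x)

/-- A persistent set is constructible if it has a finite set of critical values:
it is empty before the first critical value, and the internal maps are
isomorphisms between consecutive critical values. -/
def Constructible (M : PersistentSet) : Prop :=
  ∃ τ : Finset ℝ,
    (∀ t : ℝ, (∀ s ∈ τ, t < s) → IsEmpty (M.obj t)) ∧
    (∀ (s t : ℝ) (h : s ≤ t), (∀ c ∈ τ, c ≤ s ∨ t < c) → Function.Bijective (M.map h))

/-- A merge tree: a constructible persistent set with finite values which is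
eventually a singleton. -/
structure MergeTree where
  toPS : PersistentSet
  constructible : Constructible toPS
  finite : ∀ t, Finite (toPS.obj t)
  eventually_one : ∃ T : ℝ, ∀ t, T ≤ t → (Nonempty (toPS.obj t) ∧ Subsingleton (toPS.obj t))

/-- Combinatorial data of a presentation: `k` generator strands with birth times `γ`,
`l` relation strands with birth times `ρ`, and for each relation two merge maps
`f j`, `g j` into the generators (a map of strands `R_j → G_i` exists iff
`γ i ≤ ρ j`, which is the content of `hf`, `hg`). -/
structure Pres (k l : ℕ) where
  γ : Fin k → ℝ
  ρ : Fin l → ℝ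
  f : Fin l → Fin k
  g : Fin l → Fin k
  hf : ∀ j, γ (f j) ≤ ρ j
  hg : ∀ j, γ (g j) ≤ ρ j

/-- The relation at time `t` identifying the two targets of each relation strand
born by time `t`. -/
def Pres.rel {k l : ℕ} (P : Pres k l) (t : ℝ) :
    {i : Fin k // P.γ i ≤ t} → {i : Fin k // P.γ i ≤ t} → Prop :=
  fun a b => ∃ j : Fin l, P.ρ j ≤ t ∧
    ((P.f j = a.1 ∧ P.g j = b.1) ∨ (P.f j = b.1 ∧ P.g j = a.1))

/-- The persistent set presented by `P`: the pointwise coequalizer of the pair of maps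
`⊔ⱼ Rⱼ ⇉ ⊔ᵢ Gᵢ` of disjoint unions of strands. -/
def Pres.toPS {k l : ℕ} (P : Pres k l) : PersistentSet where
  obj t := Quot (P.rel t)
  map := fun {s t} h =>
    Quot.lift (fun a => Quot.mk (P.rel t) ⟨a.1, le_trans a.2 h⟩)
      (fun a b hab => Quot.sound (by
        obtain ⟨j, hj, hc⟩ := hab
        exact ⟨j, le_trans hj h, hc⟩))
  map_id := fun t x => Quot.inductionOn x fun a => rfl
  map_comp := fun h1 h2 x => Quot.inductionOn x fun a => rfl

/-- An isomorphism of persistent sets: a natural family of bijections. -/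
structure PSIso (M N : PersistentSet) where
  hom : ∀ t, M.obj t → N.obj t
  natural : ∀ {s t : ℝ} (h : s ≤ t) (x : M.obj s), hom t (M.map h x) = N.map h (hom s x)
  bij : ∀ t, Function.Bijective (hom t)

/-- `P` is a presentation of the persistent set `M`. -/
def IsPresentation {k l : ℕ} (P : Pres k l) (M : PersistentSet) : Prop :=
  Nonempty (PSIso P.toPS M)

/-- Two presentations are compatible if their underlying 0-1 presentation matrices agree:
entry `(i,j)` is 1 iff one of the two merge maps of relation `j` lands in generator `i`. -/
def Compatible {k l : ℕ} (P Q : Pres k l) : Prop :=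
  ∀ (i : Fin k) (j : Fin l), (P.f j = i ∨ P.g j = i) ↔ (Q.f j = i ∨ Q.g j = i)

/-- The `ℓp`-norm of a finite vector of reals, `p ∈ [1,∞]`. -/
noncomputable def lpNorm (p : ℝ≥0∞) {n : ℕ} (x : Fin n → ℝ) : ℝ :=
  if p = ⊤ then ⨆ i, |x i| else (∑ i, |x i| ^ p.toReal) ^ (1 / p.toReal)

/-- The difference of the label vectors of two compatible presentations: the vector of
differences of generator birth times followed by differences of relation birth times. -/
noncomputable def labelDiff {k l : ℕ} (P Q : Pres k l) : Fin (k + l) → ℝ :=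
  Fin.append (fun i => P.γ i - Q.γ i) (fun j => P.ρ j - Q.ρ j)

/-- The `p`-presentation semi-distance between merge trees. -/
noncomputable def dHat (p : ℝ≥0∞) (M N : MergeTree) : ℝ :=
  sInf {c | ∃ (k l : ℕ) (P Q : Pres k l), Compatible P Q ∧
    IsPresentation P M.toPS ∧ IsPresentation Q N.toPS ∧
    c = lpNorm p (labelDiff P Q)}

/-- The `p`-presentation distance: the path pseudometric induced by `dHat`. -/
noncomputable def dPres (p : ℝ≥0∞) (M N : MergeTree) : ℝ :=
  sInf {c | ∃ (n : ℕ) (Z : Fin (n + 1) → MergeTree), Z 0 = M ∧ Z (Fin.last n) = N ∧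
    c = ∑ i : Fin n, dHat p (Z i.castSucc) (Z i.succ)}

/-- A merge forest: a constructible persistent set with finite values. -/
structure MergeForest where
  toPS : PersistentSet
  constructible : Constructible toPS
  finite : ∀ t, Finite (toPS.obj t)

/-!
Past its last label, a presentation presents the set of connected components of the graph of its
relations, and that graph is determined by the presentation matrix; so compatible presentations
eventually present sets of the same size.

Conversely, a constructible persistent set is presented by its elements at the critical times,
with one relation for each internal map between them. Given such presentations `A` of `M` and `B`
of `N` and a bijection `e` between their components at a late time `T`, take the disjoint union of
the generators and of the relations of `A` and `B`, together with one relation joining each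
generator `p` of `A` to a generator of the component `e [p]` of `B`. Keeping the labels of `A` and
labelling everything else by `T` still presents `M`; keeping the labels of `B` and labelling
everything else by `T` presents `N`; and the two presentations have the same matrix.
-/

lemma PersistentSet.map_eq_map_of_map_eq (M : PersistentSet) {s u t : ℝ} (h : s ≤ u)
    {x : M.obj s} {y : M.obj u} (hxy : M.map h x = y) (hs : s ≤ t) (hu : u ≤ t) :
    M.map hs x = M.map hu y := by
  rw [← hxy, M.map_comp]

abbrev PersistentSet.EltsAt (M : PersistentSet) (S : Finset ℝ) : Type := Σ c : S, M.obj c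

abbrev PersistentSet.ArrowsAt (M : PersistentSet) (S : Finset ℝ) : Type :=
  {p : M.EltsAt S × M.EltsAt S // ∃ h : (p.1.1 : ℝ) ≤ p.2.1, M.map h p.1.2 = p.2.2}

def PersistentSet.IsCriticalSet (M : PersistentSet) (S : Finset ℝ) : Prop :=
  (∀ t : ℝ, (∀ c ∈ S, t < c) → IsEmpty (M.obj t)) ∧
    ∀ (s t : ℝ) (h : s ≤ t), (∀ c ∈ S, c ≤ s ∨ t < c) → Function.Bijective (M.map h)

lemma PSIso.card_eq {M N : PersistentSet} (e : PSIso M N) (t : ℝ) :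
    Nat.card (M.obj t) = Nat.card (N.obj t) :=
  Nat.card_congr (Equiv.ofBijective _ (e.bij t))

def PSIso.trans {L M N : PersistentSet} (e₁ : PSIso L M) (e₂ : PSIso M N) : PSIso L N where
  hom t := e₂.hom t ∘ e₁.hom t
  natural h x := by simp only [Function.comp_apply, e₁.natural, e₂.natural]
  bij t := (e₂.bij t).comp (e₁.bij t)

lemma exists_ge_bounds_of_finite {α β : Type} [Finite α] [Finite β] (u : α → ℝ) (v : β → ℝ)
    (T : ℝ) : ∃ T' ≥ T, (∀ a, u a ≤ T') ∧ ∀ b, v b ≤ T' := by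
  obtain ⟨U, hU⟩ := Finite.exists_le u
  obtain ⟨V, hV⟩ := Finite.exists_le v
  exact ⟨max T (max U V), le_max_left _ _, fun a => (hU a).trans (by simp),
    fun b => (hV b).trans (by simp)⟩

section Compatibility

variable {k l : ℕ} {P Q : Pres k l}

lemma Compatible.sym2_eq (h : Compatible P Q) (j : Fin l) :
    s(P.f j, P.g j) = s(Q.f j, Q.g j) :=
  Sym2.ext fun i => by simpa [eq_comm] using h i j

def Compatible.lateEquiv (h : Compatible P Q) {t : ℝ} (hPγ : ∀ i, P.γ i ≤ t)
    (hQγ : ∀ i, Q.γ i ≤ t) (hPρ : ∀ j, P.ρ j ≤ t) (hQρ : ∀ j, Q.ρ j ≤ t) :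
    Quot (P.rel t) ≃ Quot (Q.rel t) :=
  Quot.congr (Equiv.subtypeEquivRight fun i => by simp only [hPγ i, hQγ i]) fun a b => by
    simp only [Pres.rel, hPρ, hQρ, true_and, ← Sym2.eq_iff, h.sym2_eq]
    rfl

lemma Compatible.eventually_card_eq (h : Compatible P Q) {M N : PersistentSet}
    (hM : IsPresentation P M) (hN : IsPresentation Q N) :
    ∃ T : ℝ, ∀ t, T ≤ t → Nat.card (M.obj t) = Nat.card (N.obj t) := by
  obtain ⟨eM⟩ := hM
  obtain ⟨eN⟩ := hN
  obtain ⟨T, -, hγ, hρ⟩ := exists_ge_bounds_of_finite (Sum.elim P.γ Q.γ) (Sum.elim P.ρ Q.ρ) 0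
  refine ⟨T, fun t ht => ?_⟩
  rw [← eM.card_eq, ← eN.card_eq]
  exact Nat.card_congr <| h.lateEquiv (fun i => (hγ (.inl i)).trans ht)
    (fun i => (hγ (.inr i)).trans ht) (fun j => (hρ (.inl j)).trans ht)
    (fun j => (hρ (.inr j)).trans ht)

end Compatibility

structure IndexedPres (G R : Type) where
  γ : G → ℝ
  ρ : R → ℝ
  f : R → G
  g : R → G
  hf : ∀ j, γ (f j) ≤ ρ j
  hg : ∀ j, γ (g j) ≤ ρ j

namespace IndexedPres

variable {G R G' R' : Type} (A : IndexedPres G R) (B : IndexedPres G' R')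

def rel (t : ℝ) : {i // A.γ i ≤ t} → {i // A.γ i ≤ t} → Prop :=
  fun a b => ∃ j, A.ρ j ≤ t ∧ ((A.f j = a.1 ∧ A.g j = b.1) ∨ (A.f j = b.1 ∧ A.g j = a.1))

def toPS : PersistentSet where
  obj t := Quot (A.rel t)
  map h := Quot.lift (fun a => Quot.mk _ ⟨a.1, a.2.trans h⟩)
    fun _ _ ⟨j, hj, hab⟩ => Quot.sound ⟨j, hj.trans h, hab⟩
  map_id _ x := Quot.inductionOn x fun _ => rfl
  map_comp _ _ x := Quot.inductionOn x fun _ => rfl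

def cls (t : ℝ) (i : G) (h : A.γ i ≤ t) : A.toPS.obj t := Quot.mk _ ⟨i, h⟩

variable {A}

lemma cls_congr {t : ℝ} {i i' : G} (e : i = i') (h : A.γ i ≤ t) (h' : A.γ i' ≤ t) :
    A.cls t i h = A.cls t i' h' := by
  subst e; rfl

lemma cls_eq_of_cls_eq {s t : ℝ} (hst : s ≤ t) {i i' : G} {h : A.γ i ≤ s} {h' : A.γ i' ≤ s}
    (e : A.cls s i h = A.cls s i' h') :
    A.cls t i (h.trans hst) = A.cls t i' (h'.trans hst) :=
  congrArg (A.toPS.map hst) e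

variable (A)

lemma cls_surjective {T : ℝ} (hA : ∀ i, A.γ i ≤ T) :
    Function.Surjective fun i => A.cls T i (hA i) :=
  fun q => Quot.inductionOn q fun a => ⟨a.1, rfl⟩

lemma cls_f_eq_cls_g {t : ℝ} (j : R) (hj : A.ρ j ≤ t) (h : A.γ (A.f j) ≤ t)
    (h' : A.γ (A.g j) ≤ t) : A.cls t (A.f j) h = A.cls t (A.g j) h' :=
  Quot.sound ⟨j, hj, .inl ⟨rfl, rfl⟩⟩

def liftMap (φ : G → G') (t : ℝ) (hγ : ∀ i, A.γ i ≤ t → B.γ (φ i) ≤ t)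
    (hrel : ∀ j, A.ρ j ≤ t → ∀ h h', B.cls t (φ (A.f j)) h = B.cls t (φ (A.g j)) h') :
    A.toPS.obj t → B.toPS.obj t :=
  Quot.lift (fun a => B.cls t (φ a.1) (hγ _ a.2)) <| by
    rintro ⟨a, ha⟩ ⟨b, hb⟩ ⟨j, hj, ⟨rfl, rfl⟩ | ⟨rfl, rfl⟩⟩
    exacts [hrel j hj _ _, (hrel j hj _ _).symm]

def isoOfRetraction (ι : G → G') (r : G' → G) (hγι : ∀ i, B.γ (ι i) ≤ A.γ i)
    (hγr : ∀ i, A.γ (r i) ≤ B.γ i) (hrι : ∀ i, r (ι i) = i)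
    (hι : ∀ t j, A.ρ j ≤ t → ∀ h h', B.cls t (ι (A.f j)) h = B.cls t (ι (A.g j)) h')
    (hr : ∀ t j, B.ρ j ≤ t → ∀ h h', A.cls t (r (B.f j)) h = A.cls t (r (B.g j)) h')
    (hιr : ∀ t i h h', B.cls t i h = B.cls t (ι (r i)) h') :
    PSIso B.toPS A.toPS where
  hom t := B.liftMap A r t (fun i h => (hγr i).trans h) (hr t)
  natural _ x := Quot.inductionOn x fun _ => rfl
  bij t := by
    let retr := B.liftMap A r t (fun i h => (hγr i).trans h) (hr t)
    let incl := A.liftMap B ι t (fun i h => (hγι i).trans h) (hι t)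
    have hleft : Function.LeftInverse retr incl := by
      rintro ⟨i, h⟩
      exact cls_congr (hrι i) _ _
    have hsurj : Function.Surjective incl := by
      rintro ⟨i, h⟩
      exact ⟨A.cls t (r i) ((hγr i).trans h), (hιr t i h _).symm⟩
    exact Function.bijective_iff_has_inverse.mpr
      ⟨incl, hleft.rightInverse_of_surjective hsurj, hleft⟩

noncomputable def toPres [Finite G] [Finite R] : Pres (Nat.card G) (Nat.card R) where
  γ i := A.γ ((Finite.equivFin G).symm i)
  ρ j := A.ρ ((Finite.equivFin R).symm j)
  f j := Finite.equivFin G (A.f ((Finite.equivFin R).symm j))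
  g j := Finite.equivFin G (A.g ((Finite.equivFin R).symm j))
  hf j := by simpa using A.hf _
  hg j := by simpa using A.hg _

noncomputable def toPresIso [Finite G] [Finite R] : PSIso A.toPres.toPS A.toPS where
  hom t := Quot.congr (ra := A.toPres.rel t) (rb := A.rel t)
    ((Finite.equivFin G).symm.subtypeEquiv fun _ => Iff.rfl) fun a b => by
    simp only [Pres.rel, rel, toPres, ← Equiv.eq_symm_apply,
      (Finite.equivFin R).symm.surjective.exists]
    rfl
  natural _ x := Quot.inductionOn x fun _ => rfl
  bij t := Equiv.bijective _

section Samples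

def ofSamples (M : PersistentSet) (S : Finset ℝ) : IndexedPres (M.EltsAt S) (M.ArrowsAt S) where
  γ a := a.1
  ρ p := p.1.2.1
  f p := p.1.1
  g p := p.1.2
  hf p := p.2.fst
  hg _ := le_rfl

variable {M : PersistentSet} {S : Finset ℝ}

lemma ofSamples_cls_eq {t : ℝ} {c c' : S} (hcc' : (c : ℝ) ≤ c') (hc't : (c' : ℝ) ≤ t)
    (x : M.obj c) :
    (ofSamples M S).cls t ⟨c, x⟩ (hcc'.trans hc't) =
      (ofSamples M S).cls t ⟨c', M.map hcc' x⟩ hc't :=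
  (ofSamples M S).cls_f_eq_cls_g ⟨(⟨c, x⟩, ⟨c', M.map hcc' x⟩), hcc', rfl⟩ hc't _ _

def ofSamplesHom (M : PersistentSet) (S : Finset ℝ) (t : ℝ) :
    (ofSamples M S).toPS.obj t → M.obj t :=
  Quot.lift (fun a => M.map a.2 a.1.2) <| by
    rintro ⟨a, ha⟩ ⟨b, hb⟩ ⟨⟨⟨u, v⟩, huv, hx⟩, -, ⟨rfl, rfl⟩ | ⟨rfl, rfl⟩⟩
    exacts [M.map_eq_map_of_map_eq huv hx _ _, (M.map_eq_map_of_map_eq huv hx _ _).symm]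

lemma ofSamplesHom_bijective (hS : M.IsCriticalSet S) (t : ℝ) :
    Function.Bijective (ofSamplesHom M S t) := by
  rcases (S.filter (· ≤ t)).eq_empty_or_nonempty with hSt | hSt
  · have : IsEmpty (M.obj t) := hS.1 t fun c hc => by
      by_contra! hct
      exact Finset.notMem_empty c (hSt ▸ Finset.mem_filter.mpr ⟨hc, hct⟩)
    have := Function.isEmpty (ofSamplesHom M S t)
    exact ⟨Function.injective_of_subsingleton _, isEmptyElim⟩
  obtain ⟨c₀, hc₀, hmax⟩ := Finset.exists_max_image _ id hSt
  obtain ⟨hc₀S, hc₀t⟩ := Finset.mem_filter.mp hc₀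
  have hmax' : ∀ c ∈ S, c ≤ t → c ≤ c₀ := fun c hc hct =>
    hmax c (Finset.mem_filter.mpr ⟨hc, hct⟩)
  have hb := hS.2 c₀ t hc₀t fun c hc => (le_or_gt c t).imp (hmax' c hc) id
  have hrep : ∀ a, ∃ x, a = (ofSamples M S).cls t ⟨⟨c₀, hc₀S⟩, x⟩ hc₀t := by
    rintro ⟨⟨c, x⟩, hct⟩
    exact ⟨_, ofSamples_cls_eq (c' := ⟨c₀, hc₀S⟩) (hmax' c c.2 hct) hc₀t x⟩
  refine ⟨fun a b hab => ?_, fun y => ?_⟩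
  · obtain ⟨x, rfl⟩ := hrep a
    obtain ⟨y, rfl⟩ := hrep b
    exact congrArg (fun x => (ofSamples M S).cls t ⟨⟨c₀, hc₀S⟩, x⟩ hc₀t) (hb.1 hab)
  · obtain ⟨x, rfl⟩ := hb.2 y
    exact ⟨(ofSamples M S).cls t ⟨⟨c₀, hc₀S⟩, x⟩ hc₀t, rfl⟩

def ofSamplesIso (hS : M.IsCriticalSet S) : PSIso (ofSamples M S).toPS M where
  hom := ofSamplesHom M S
  natural _ x := Quot.inductionOn x fun _ => (M.map_comp _ _ _).symm
  bij := ofSamplesHom_bijective hS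

end Samples

section Glue

variable {G R H K : Type} (A : IndexedPres G R) (B : IndexedPres H K) (σ : G → H) {T : ℝ}

def glueSrc : R ⊕ K ⊕ G → G ⊕ H := Sum.elim (.inl ∘ A.f) (Sum.elim (.inr ∘ B.f) .inl)

def glueTgt : R ⊕ K ⊕ G → G ⊕ H := Sum.elim (.inl ∘ A.g) (Sum.elim (.inr ∘ B.g) (.inr ∘ σ))

def glueLeft (hA : ∀ i, A.γ i ≤ T) : IndexedPres (G ⊕ H) (R ⊕ K ⊕ G) where
  γ := Sum.elim A.γ fun _ => T
  ρ := Sum.elim A.ρ fun _ => T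
  f := glueSrc A B
  g := glueTgt A B σ
  hf := by rintro (j | j | p); exacts [A.hf j, le_rfl, hA p]
  hg := by rintro (j | j | p); exacts [A.hg j, le_rfl, le_rfl]

def glueRight (hB : ∀ i, B.γ i ≤ T) : IndexedPres (G ⊕ H) (R ⊕ K ⊕ G) where
  γ := Sum.elim (fun _ => T) B.γ
  ρ := Sum.elim (fun _ => T) (Sum.elim B.ρ fun _ => T)
  f := glueSrc A B
  g := glueTgt A B σ
  hf := by rintro (j | j | p); exacts [le_rfl, B.hf j, le_rfl]
  hg := by rintro (j | j | p); exacts [le_rfl, B.hg j, hB (σ p)]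

def glueLeftIso (τ : H → G) (hA : ∀ i, A.γ i ≤ T) (hB : ∀ i, B.γ i ≤ T)
    (hστ : ∀ p, A.cls T (τ (σ p)) (hA _) = A.cls T p (hA p))
    (hτ : ∀ j, A.cls T (τ (B.f j)) (hA _) = A.cls T (τ (B.g j)) (hA _))
    (hτσ : ∀ q, B.cls T (σ (τ q)) (hB _) = B.cls T q (hB q)) :
    PSIso (glueLeft A B σ hA).toPS A.toPS :=
  A.isoOfRetraction (glueLeft A B σ hA) .inl (Sum.elim id τ) (fun _ => le_rfl)
    (by rintro (p | q); exacts [le_rfl, hA (τ q)]) (fun _ => rfl)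
    (fun _ j hj => (glueLeft A B σ hA).cls_f_eq_cls_g (.inl j) hj)
    (by
      rintro t (j | j | p) hj h h'
      · exact A.cls_f_eq_cls_g j hj h h'
      · exact cls_eq_of_cls_eq hj (hτ j)
      · exact (cls_eq_of_cls_eq hj (hστ p)).symm)
    (by
      rintro t (p | q) h h'
      · rfl
      -- `q` is identified with `σ (τ q)` inside the copy of `B`, which is glued to `τ q`
      · have hBt : ∀ i, B.γ i ≤ t → (glueLeft A B σ hA).γ (.inr i) ≤ t := fun _ _ => h
        have e := congrArg (B.liftMap (glueLeft A B σ hA) .inr t hBt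
          fun j _ => (glueLeft A B σ hA).cls_f_eq_cls_g (.inr (.inl j)) h)
          (cls_eq_of_cls_eq h (hτσ q))
        exact e.symm.trans ((glueLeft A B σ hA).cls_f_eq_cls_g (.inr (.inr (τ q))) h _ _).symm)

def glueRightIso (hB : ∀ i, B.γ i ≤ T)
    (hσ : ∀ j, B.cls T (σ (A.f j)) (hB _) = B.cls T (σ (A.g j)) (hB _)) :
    PSIso (glueRight A B σ hB).toPS B.toPS :=
  B.isoOfRetraction (glueRight A B σ hB) .inr (Sum.elim σ id) (fun _ => le_rfl)
    (by rintro (p | q); exacts [hB (σ p), le_rfl]) (fun _ => rfl)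
    (fun _ j hj => (glueRight A B σ hB).cls_f_eq_cls_g (.inr (.inl j)) hj)
    (by
      rintro t (j | j | p) hj h h'
      · exact cls_eq_of_cls_eq hj (hσ j)
      · exact B.cls_f_eq_cls_g j hj h h'
      · rfl)
    (by
      rintro t (p | q) h h'
      · exact (glueRight A B σ hB).cls_f_eq_cls_g (.inr (.inr p)) h _ _
      · rfl)

lemma exists_compatible_of_equiv [Finite G] [Finite R] [Finite H] [Finite K]
    (hA : ∀ i, A.γ i ≤ T) (hB : ∀ i, B.γ i ≤ T) (hAρ : ∀ j, A.ρ j ≤ T) (hBρ : ∀ j, B.ρ j ≤ T)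
    (e : A.toPS.obj T ≃ B.toPS.obj T) :
    ∃ (k l : ℕ) (P Q : Pres k l), Compatible P Q ∧
      Nonempty (PSIso P.toPS A.toPS) ∧ Nonempty (PSIso Q.toPS B.toPS) := by
  have hA' := A.cls_surjective hA
  have hB' := B.cls_surjective hB
  let σ := Function.surjInv hB' ∘ e ∘ fun i => A.cls T i (hA i)
  let τ := Function.surjInv hA' ∘ e.symm ∘ fun i => B.cls T i (hB i)
  have hσ (p : G) : B.cls T (σ p) (hB _) = e (A.cls T p (hA p)) := Function.surjInv_eq hB' _
  have hτ (q : H) : A.cls T (τ q) (hA _) = e.symm (B.cls T q (hB q)) := Function.surjInv_eq hA' _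
  refine ⟨_, _, (glueLeft A B σ hA).toPres, (glueRight A B σ hB).toPres, fun _ _ => Iff.rfl,
    ⟨(toPresIso _).trans (glueLeftIso A B σ τ hA hB (fun p => ?_) (fun j => ?_) (fun q => ?_))⟩,
    ⟨(toPresIso _).trans (glueRightIso A B σ hB fun j => ?_)⟩⟩
  · rw [hτ, hσ, e.symm_apply_apply]
  · rw [hτ, hτ, B.cls_f_eq_cls_g j (hBρ j)]
  · rw [hσ, hτ, e.apply_symm_apply]
  · rw [hσ, hσ, A.cls_f_eq_cls_g j (hAρ j)]

end Glue

end IndexedPres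

open IndexedPres in
/-- two merge forests admit compatible presentations if and only if they
have the same number of connected components, i.e. the same eventual cardinality
`|M(t)|` for large `t`. -/
theorem forests_compatible_iff_same_components (M N : MergeForest) :
    (∃ (k l : ℕ) (P Q : Pres k l), Compatible P Q ∧
      IsPresentation P M.toPS ∧ IsPresentation Q N.toPS) ↔
    (∃ T : ℝ, ∀ t, T ≤ t → Nat.card (M.toPS.obj t) = Nat.card (N.toPS.obj t)) := by
  refine ⟨fun ⟨_, _, _, _, h, hM, hN⟩ => h.eventually_card_eq hM hN, fun ⟨T, hT⟩ => ?_⟩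
  obtain ⟨τM, hτM⟩ := M.constructible
  obtain ⟨τN, hτN⟩ := N.constructible
  have := M.finite
  have := N.finite
  let A := ofSamples M.toPS τM
  let B := ofSamples N.toPS τN
  let isoA : PSIso A.toPS M.toPS := ofSamplesIso hτM
  let isoB : PSIso B.toPS N.toPS := ofSamplesIso hτN
  obtain ⟨T', hTT', hγ, hρ⟩ :=
    exists_ge_bounds_of_finite (Sum.elim A.γ B.γ) (Sum.elim A.ρ B.ρ) T
  obtain ⟨eMN⟩ := Finite.card_eq.mp (hT T' hTT')
  let e := (Equiv.ofBijective _ (isoA.bij T')).trans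
    (eMN.trans (Equiv.ofBijective _ (isoB.bij T')).symm)
  obtain ⟨k, l, P, Q, hPQ, ⟨isoP⟩, ⟨isoQ⟩⟩ := exists_compatible_of_equiv A B
    (fun i => hγ (.inl i)) (fun i => hγ (.inr i)) (fun j => hρ (.inl j)) (fun j => hρ (.inr j)) e
  exact ⟨k, l, P, Q, hPQ, ⟨isoP.trans isoA⟩, ⟨isoQ.trans isoB⟩⟩
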